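/- arXiv:1012.0182 — 3 statements merged into one kernel-verified Lean document; each statement's English description precedes it below -/
import Mathlib

section
/- For the real Grassmannian Gr_k(n) of k-dimensional subspaces of ℝ^n with 1 ≤ k ≤ n−1, the combinatorial orientability criterion for type A_{n−1} holds if and only if n is even; equivalently: for the simple root α_k of A_{n−1}, the sum Σ_{β ∈ ⟨Θ⟩⁺} ⟨α_k∨, β⟩ with Θ = Σ \ {α_k} is even if and only if n ≡ 0 (mod 2). -/
open RealInnerProductSpace

/-- The pairing `⟨α∨, β⟩ = 2⟨α,β⟩/⟨α,α⟩`. -/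
noncomputable def pairing {V : Type*} [NormedAddCommGroup V] [InnerProductSpace ℝ V]
    (α β : V) : ℝ := 2 * ⟪α, β⟫ / ⟪α, α⟫

/-- The reflection `r_α(β) = β − ⟨α∨, β⟩α`. -/
noncomputable def reflect {V : Type*} [NormedAddCommGroup V] [InnerProductSpace ℝ V]
    (α β : V) : V := β - pairing α β • α

/-- A (possibly non-reduced) root system in a real inner product space. -/
def IsRootSystem {V : Type*} [NormedAddCommGroup V] [InnerProductSpace ℝ V]
    (Φ : Finset V) : Prop :=
  (∀ α ∈ Φ, α ≠ 0) ∧ (∀ α ∈ Φ, ∀ β ∈ Φ, reflect α β ∈ Φ) ∧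
  (∀ α ∈ Φ, ∀ β ∈ Φ, ∃ n : ℤ, pairing α β = n)

/-- A choice of positive roots: for each root exactly one of `β`, `-β` is positive. -/
def IsPositiveSystem {V : Type*} [NormedAddCommGroup V] [InnerProductSpace ℝ V]
    (Φ ΦP : Finset V) : Prop :=
  ΦP ⊆ Φ ∧ ∀ β ∈ Φ, Xor' (β ∈ ΦP) (-β ∈ ΦP)

/-- A simple system: every positive root is a nonnegative integer combination of simple roots. -/
def IsSimpleSystem {V : Type*} [NormedAddCommGroup V] [InnerProductSpace ℝ V]
    (ΦP S : Finset V) : Prop :=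
  S ⊆ ΦP ∧ ∀ β ∈ ΦP, ∃ c : V → ℕ, β = ∑ γ ∈ S, (c γ : ℝ) • γ

/-!
In `0`-based indices `α_k = e_{k-1} - e_k`. Since `‖α_k‖² = 2`, the coroot pairing with `α_k` is
`v ↦ v_{k-1} - v_k`, and it is additive, so the sum equals `⟨α_k∨, 2ρ_Θ⟩` with
`2ρ_Θ = Σ_{β ∈ ⟨Θ⟩⁺} β`. The `(k-1)`-th coordinate of `2ρ_Θ` is `-(k-1)`, because `k-1` is the
largest index of the first block, and the `k`-th is `n-1-k`, because `k` is the smallest index of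
the second block. Hence the sum is `2 - n`.
-/

section Pairing

variable {V : Type*} [NormedAddCommGroup V] [InnerProductSpace ℝ V]

theorem sum_pairing {ι : Type*} (s : Finset ι) (α : V) (β : ι → V) :
    ∑ i ∈ s, pairing α (β i) = pairing α (∑ i ∈ s, β i) := by
  simp only [pairing, inner_sum, Finset.mul_sum, Finset.sum_div]

end Pairing

section EuclideanSpace

variable {ι : Type*} [DecidableEq ι]

theorem sum_single_sub_single_apply (P : Finset (ι × ι)) (i : ι) :
    (∑ p ∈ P, (EuclideanSpace.single p.1 (1 : ℝ) - EuclideanSpace.single p.2 1 :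
      EuclideanSpace ℝ ι)) i = ((P.filter (·.1 = i)).card - (P.filter (·.2 = i)).card : ℝ) := by
  simp [WithLp.ofLp_sum, Finset.sum_sub_distrib, Pi.single_apply, Finset.sum_boole, eq_comm]

variable [Fintype ι]

theorem inner_single_sub_single_left (a b : ι) (v : EuclideanSpace ℝ ι) :
    ⟪EuclideanSpace.single a (1 : ℝ) - EuclideanSpace.single b 1, v⟫ = v a - v b := by
  simp [inner_sub_left, EuclideanSpace.inner_single_left]

theorem pairing_single_sub_single {a b : ι} (hab : a ≠ b) (v : EuclideanSpace ℝ ι) :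
    pairing (EuclideanSpace.single a (1 : ℝ) - EuclideanSpace.single b 1) v = v a - v b := by
  have hnorm : ⟪EuclideanSpace.single a (1 : ℝ) - EuclideanSpace.single b 1,
      EuclideanSpace.single a (1 : ℝ) - EuclideanSpace.single b 1⟫ = 2 := by
    rw [inner_single_sub_single_left]
    simp [hab, hab.symm]
    norm_num
  rw [pairing, hnorm, inner_single_sub_single_left]
  ring

end EuclideanSpace

/-- The pairs `(i, j)` with `e_i - e_j ∈ ⟨Θ⟩⁺` for `Θ = Σ \ {α_k}`, with `0`-based indices. -/
def leviPositivePairs (n k : ℕ) : Finset (Fin n × Fin n) :=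
  Finset.univ.filter (fun p : Fin n × Fin n => p.1 < p.2 ∧ (p.2.val < k ∨ k ≤ p.1.val))

section LeviPositivePairs

variable {n k : ℕ}

theorem leviPositivePairs_filter_fst_last (h : k - 1 < n) (hk : 1 ≤ k) :
    (leviPositivePairs n k).filter (·.1 = ⟨k - 1, h⟩) = ∅ := by
  ext p
  simp only [leviPositivePairs, Finset.mem_filter, Finset.mem_univ, true_and,
    Finset.notMem_empty, iff_false, Fin.lt_def, Fin.ext_iff]
  omega

theorem leviPositivePairs_filter_snd_first (h : k < n) :
    (leviPositivePairs n k).filter (·.2 = ⟨k, h⟩) = ∅ := by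
  ext p
  simp only [leviPositivePairs, Finset.mem_filter, Finset.mem_univ, true_and,
    Finset.notMem_empty, iff_false, Fin.lt_def, Fin.ext_iff]
  omega

theorem leviPositivePairs_filter_fst_first (h : k < n) :
    (leviPositivePairs n k).filter (·.1 = ⟨k, h⟩) = {⟨k, h⟩} ×ˢ Finset.Ioi ⟨k, h⟩ := by
  ext p
  simp only [leviPositivePairs, Finset.mem_filter, Finset.mem_univ, true_and, Finset.mem_product,
    Finset.mem_singleton, Finset.mem_Ioi, Fin.lt_def, Fin.ext_iff]
  omega

theorem leviPositivePairs_filter_snd_last (h : k - 1 < n) :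
    (leviPositivePairs n k).filter (·.2 = ⟨k - 1, h⟩) = Finset.Iio ⟨k - 1, h⟩ ×ˢ {⟨k - 1, h⟩} := by
  ext p
  simp only [leviPositivePairs, Finset.mem_filter, Finset.mem_univ, true_and, Finset.mem_product,
    Finset.mem_singleton, Finset.mem_Iio, Fin.lt_def, Fin.ext_iff]
  omega

end LeviPositivePairs

theorem exists_int_cast_eq_two_mul_iff_even (x : ℤ) :
    (∃ m : ℤ, (x : ℝ) = 2 * m) ↔ Even x := by
  simp only [even_iff_exists_two_mul]
  exact_mod_cast Iff.rfl

/-- Grassmannian criterion in type `A_{n−1}`: for `Θ = Σ \ {α_k}`, the sum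
`Σ_{β ∈ ⟨Θ⟩⁺} ⟨α_k∨, β⟩` is even if and only if `n` is even.  (This encodes that
`Gr_k(n)` is orientable iff `n` is even.) -/
theorem stmt15 (n k : ℕ) (hk1 : 1 ≤ k) (hk2 : k < n) :
    ((∃ m : ℤ,
      (∑ p ∈ Finset.univ.filter
          (fun p : Fin n × Fin n => p.1 < p.2 ∧ (p.2.val < k ∨ k ≤ p.1.val)),
        pairing
          (EuclideanSpace.single (⟨k - 1, by omega⟩ : Fin n) (1 : ℝ)
            - EuclideanSpace.single (⟨k, by omega⟩ : Fin n) (1 : ℝ))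
          (EuclideanSpace.single p.1 (1 : ℝ) - EuclideanSpace.single p.2 (1 : ℝ)))
        = 2 * m) ↔ Even n) := by
  have hlast : k - 1 < n := by omega
  have hne : (⟨k - 1, hlast⟩ : Fin n) ≠ ⟨k, hk2⟩ := Fin.ne_of_val_ne (by dsimp only; omega)
  have hsum : ∑ p ∈ leviPositivePairs n k,
      pairing (EuclideanSpace.single (⟨k - 1, hlast⟩ : Fin n) (1 : ℝ)
          - EuclideanSpace.single ⟨k, hk2⟩ 1)
        (EuclideanSpace.single p.1 (1 : ℝ) - EuclideanSpace.single p.2 1) = ((2 - n : ℤ) : ℝ) := by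
    rw [sum_pairing, pairing_single_sub_single hne, sum_single_sub_single_apply,
      sum_single_sub_single_apply, leviPositivePairs_filter_fst_last hlast hk1,
      leviPositivePairs_filter_snd_last hlast, leviPositivePairs_filter_fst_first hk2,
      leviPositivePairs_filter_snd_first hk2]
    simp only [Finset.card_empty, Finset.card_product, Finset.card_singleton, Fin.card_Ioi,
      Fin.card_Iio]
    push_cast [Nat.cast_sub (by omega : k ≤ n - 1), Nat.cast_sub (by omega : 1 ≤ n),
      Nat.cast_sub hk1]
    ring
  rw [← leviPositivePairs, hsum, exists_int_cast_eq_two_mul_iff_even, Int.even_sub]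
  simp [Int.even_coe_nat]
end

section
/- In type A_{l} (roots e_i − e_j in ℝ^{l+1}), given dimensions 0 = d_0 < d_1 < ⋯ < d_k < d_{k+1} = l+1 and Θ = Σ \ {α_{d_1},…,α_{d_k}}, the parity condition 'Σ_{β ∈ ⟨Θ⟩⁺} ⟨α∨, β⟩ ≡ 0 (mod 2) for every α ∈ Σ \ Θ' holds if and only if all the differences d_{i+1} − d_i (i = 0,…,k) are congruent modulo 2. -/
open RealInnerProductSpace

/-!
For `α = e_a − e_{a+1}` with `a + 1 = d_t`, the pairing `⟨α∨, e_i − e_j⟩` is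
`[i = a] − [j = a] − [i = a+1] + [j = a+1]`. Summed over the pairs `i < j` lying in a common
block `[d_s, d_{s+1})`, only pairs meeting the two blocks adjacent to the wall `d_t` contribute,
and the sum is `−(n_{t-1} − 1) − (n_t − 1)`, where `n_s = d_{s+1} − d_s` are the block sizes.
So the parity condition at the wall `d_t` says exactly `n_{t-1} ≡ n_t (mod 2)`.
-/

open Finset

lemma pairing_single_sub_single_s16 {ι : Type*} [Fintype ι] [DecidableEq ι] {a b : ι} (hab : a ≠ b)
    (i j : ι) :
    pairing (EuclideanSpace.single a (1 : ℝ) - EuclideanSpace.single b 1)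
        (EuclideanSpace.single i (1 : ℝ) - EuclideanSpace.single j 1) =
      (if a = i then 1 else 0) - (if a = j then 1 else 0)
        - (if b = i then 1 else 0) + (if b = j then 1 else 0) := by
  simp only [pairing, inner_sub_left, inner_sub_right, EuclideanSpace.inner_single_left,
    PiLp.single_apply, map_one, one_mul, if_neg hab, if_neg hab.symm, if_true]
  ring

lemma Fin.card_filter_le_val_lt {n lo hi : ℕ} (h : hi ≤ n) :
    #{i : Fin n | lo ≤ i.val ∧ i.val < hi} = hi - lo := by
  rw [← Nat.card_Ico, ← card_map Fin.valEmbedding]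
  congr 1
  ext m
  simp only [mem_map, mem_filter, mem_univ, true_and, Fin.valEmbedding_apply, mem_Ico]
  exact ⟨fun ⟨i, hi, him⟩ => him ▸ hi, fun hm => ⟨⟨m, by omega⟩, hm, rfl⟩⟩

lemma Monotone.eq_of_mem_Ico_of_mem_Ico {α : Type*} [Preorder α] {k : ℕ} {d : Fin (k + 2) → α}
    (hd : Monotone d) {x : α} {s s' : Fin (k + 1)}
    (hs : d s.castSucc ≤ x ∧ x < d s.succ) (hs' : d s'.castSucc ≤ x ∧ x < d s'.succ) :
    s = s' := by
  by_contra hne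
  rcases lt_or_gt_of_ne hne with h | h
  · exact (hs.2.trans_le (hs'.1.trans' (hd (Fin.succ_le_castSucc_iff.2 h)))).false
  · exact (hs'.2.trans_le (hs.1.trans' (hd (Fin.succ_le_castSucc_iff.2 h)))).false

lemma Fin.forall_eq_iff_forall_castSucc_eq_succ {α : Type*} {n : ℕ} {f : Fin (n + 1) → α} :
    (∀ i j, f i = f j) ↔ ∀ i : Fin n, f i.castSucc = f i.succ := by
  refine ⟨fun h i => h _ _, fun h => ?_⟩
  have eq_zero : ∀ i, f i = f 0 := by
    intro i
    induction i using Fin.induction with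
    | zero => rfl
    | succ i ih => rw [← h i, ih]
  intro i j
  rw [eq_zero i, eq_zero j]

lemma Int.exists_cast_eq_two_mul_iff (z : ℤ) : (∃ m : ℤ, (z : ℝ) = 2 * m) ↔ 2 ∣ z := by
  simp only [dvd_iff_exists_eq_mul_right]
  exact_mod_cast Iff.rfl

-- The positive roots `e_i − e_j` of `⟨Θ⟩⁺`, encoded by their index pairs `(i, j)`.
def blockPairs (n k : ℕ) (d : Fin (k + 2) → ℕ) : Finset (Fin n × Fin n) :=
  univ.filter (fun p : Fin n × Fin n => p.1 < p.2 ∧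
    ∃ s : Fin (k + 1), d s.castSucc ≤ p.1.val ∧ p.2.val < d s.succ)

section BlockPairs

variable {n k : ℕ} {d : Fin (k + 2) → ℕ}

lemma mem_blockPairs {p : Fin n × Fin n} : p ∈ blockPairs n k d ↔
    p.1 < p.2 ∧ ∃ s : Fin (k + 1), d s.castSucc ≤ p.1.val ∧ p.2.val < d s.succ := by
  simp [blockPairs]

lemma card_blockPairs_filter_fst_eq (hd : Monotone d) {s : Fin (k + 1)} {a : Fin n}
    (ha : d s.castSucc ≤ a ∧ a < d s.succ) (hn : d s.succ ≤ n) :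
    #{p ∈ blockPairs n k d | a = p.1} = d s.succ - (a + 1) := by
  rw [← Fin.card_filter_le_val_lt hn]
  refine card_nbij' Prod.snd (fun j => (a, j)) ?_ ?_ ?_ ?_
  · rintro ⟨i, j⟩ hp
    simp only [coe_filter, Set.mem_ofPred_eq, mem_blockPairs, mem_univ, true_and] at hp ⊢
    obtain ⟨⟨hij, s', hs'i, hs'j⟩, rfl⟩ := hp
    obtain rfl := hd.eq_of_mem_Ico_of_mem_Ico ha ⟨hs'i, (Fin.lt_def.1 hij).trans hs'j⟩
    exact ⟨hij, hs'j⟩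
  · rintro j hj
    simp only [coe_filter, Set.mem_ofPred_eq, mem_blockPairs, mem_univ, true_and] at hj ⊢
    exact ⟨⟨Fin.lt_def.2 hj.1, s, ha.1, hj.2⟩, trivial⟩
  · rintro ⟨i, j⟩ hp
    obtain rfl := (mem_filter.1 hp).2
    rfl
  · intro j _
    rfl

lemma card_blockPairs_filter_snd_eq (hd : Monotone d) {s : Fin (k + 1)} {a : Fin n}
    (ha : d s.castSucc ≤ a ∧ a < d s.succ) :
    #{p ∈ blockPairs n k d | a = p.2} = a - d s.castSucc := by
  rw [← Fin.card_filter_le_val_lt a.isLt.le]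
  refine card_nbij' Prod.fst (fun i => (i, a)) ?_ ?_ ?_ ?_
  · rintro ⟨i, j⟩ hp
    simp only [coe_filter, Set.mem_ofPred_eq, mem_blockPairs, mem_univ, true_and] at hp ⊢
    obtain ⟨⟨hij, s', hs'i, hs'j⟩, rfl⟩ := hp
    obtain rfl := hd.eq_of_mem_Ico_of_mem_Ico ha ⟨hs'i.trans (Fin.lt_def.1 hij).le, hs'j⟩
    exact ⟨hs'i, hij⟩
  · rintro i hi
    simp only [coe_filter, Set.mem_ofPred_eq, mem_blockPairs, mem_univ, true_and] at hi ⊢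
    exact ⟨⟨Fin.lt_def.2 hi.2, s, hi.1, ha.2⟩, trivial⟩
  · rintro ⟨i, j⟩ hp
    obtain rfl := (mem_filter.1 hp).2
    rfl
  · intro i _
    rfl

lemma sum_pairing_blockPairs (hd : Monotone d) (hn : d (Fin.last (k + 1)) ≤ n)
    {s t : Fin (k + 1)} {a b : Fin n} (hab : a ≠ b)
    (ha : d s.castSucc ≤ a ∧ a < d s.succ) (hb : d t.castSucc ≤ b ∧ b < d t.succ) :
    ∑ p ∈ blockPairs n k d, pairing
        (EuclideanSpace.single a (1 : ℝ) - EuclideanSpace.single b 1)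
        (EuclideanSpace.single p.1 (1 : ℝ) - EuclideanSpace.single p.2 1) =
      (((d s.succ - (a + 1) : ℕ) - (a - d s.castSucc : ℕ)
        - (d t.succ - (b + 1) : ℕ) + (b - d t.castSucc : ℕ) : ℤ) : ℝ) := by
  have hle_n : ∀ u : Fin (k + 1), d u.succ ≤ n := fun u => (hd (Fin.le_last _)).trans hn
  simp only [pairing_single_sub_single_s16 hab, sum_add_distrib, sum_sub_distrib, sum_boole,
    card_blockPairs_filter_fst_eq hd ha (hle_n s), card_blockPairs_filter_snd_eq hd ha,
    card_blockPairs_filter_fst_eq hd hb (hle_n t), card_blockPairs_filter_snd_eq hd hb]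
  norm_cast

lemma exists_sum_pairing_blockPairs_eq_two_mul_iff (hd : StrictMono d)
    (hn : d (Fin.last (k + 1)) ≤ n) {t : Fin k} {a b : Fin n}
    (ha : a.val + 1 = d t.succ.castSucc) (hb : b.val = d t.succ.castSucc) :
    (∃ m : ℤ, ∑ p ∈ blockPairs n k d, pairing
        (EuclideanSpace.single a (1 : ℝ) - EuclideanSpace.single b 1)
        (EuclideanSpace.single p.1 (1 : ℝ) - EuclideanSpace.single p.2 1) = 2 * m) ↔
      (d t.castSucc.succ - d t.castSucc.castSucc) % 2 = (d t.succ.succ - d t.succ.castSucc) % 2 := by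
  have hlo : d t.castSucc.castSucc < d t.succ.castSucc := hd (Fin.castSucc_lt_castSucc_iff.2
    Fin.castSucc_lt_succ)
  have hhi : d t.succ.castSucc < d t.succ.succ := hd Fin.castSucc_lt_succ
  rw [sum_pairing_blockPairs hd.monotone hn (s := t.castSucc) (t := t.succ) (Fin.ne_of_val_ne
      (by omega)) (by rw [Fin.succ_castSucc]; omega) (by omega)]
  rw [Int.exists_cast_eq_two_mul_iff, Fin.succ_castSucc]
  omega

end BlockPairs

theorem stmt16_general (l k : ℕ) (d : Fin (k + 2) → ℕ) (hmono : StrictMono d)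
    (hlast : d (Fin.last (k + 1)) = l + 1) :
    ((∀ t : Fin k, ∀ a b : Fin (l + 1),
        a.val + 1 = d t.succ.castSucc → b.val = d t.succ.castSucc →
        ∃ m : ℤ,
          (∑ p ∈ Finset.univ.filter
              (fun p : Fin (l + 1) × Fin (l + 1) => p.1 < p.2 ∧
                ∃ s : Fin (k + 1), d s.castSucc ≤ p.1.val ∧ p.2.val < d s.succ),
            pairing
              (EuclideanSpace.single a (1 : ℝ) - EuclideanSpace.single b (1 : ℝ))
              (EuclideanSpace.single p.1 (1 : ℝ) - EuclideanSpace.single p.2 (1 : ℝ)))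
            = 2 * m) ↔
      (∀ i j : Fin (k + 1),
        (d i.succ - d i.castSucc) % 2 = (d j.succ - d j.castSucc) % 2)) := by
  have parity_at_wall (t : Fin k) :
      (∀ a b : Fin (l + 1), a.val + 1 = d t.succ.castSucc → b.val = d t.succ.castSucc →
        ∃ m : ℤ, ∑ p ∈ blockPairs (l + 1) k d, pairing
          (EuclideanSpace.single a (1 : ℝ) - EuclideanSpace.single b 1)
          (EuclideanSpace.single p.1 (1 : ℝ) - EuclideanSpace.single p.2 1) = 2 * m) ↔
        (d t.castSucc.succ - d t.castSucc.castSucc) % 2 =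
          (d t.succ.succ - d t.succ.castSucc) % 2 := by
    have hpos : d 0 < d t.succ.castSucc := hmono (Fin.castSucc_pos (Fin.succ_pos t))
    have hlt : d t.succ.castSucc < l + 1 := hlast ▸ hmono (Fin.castSucc_lt_last _)
    refine ⟨fun H => ?_, fun H a b ha hb => (exists_sum_pairing_blockPairs_eq_two_mul_iff
      hmono hlast.le ha hb).2 H⟩
    have ha : (d t.succ.castSucc - 1) + 1 = d t.succ.castSucc := by omega
    exact (exists_sum_pairing_blockPairs_eq_two_mul_iff hmono hlast.le
      (a := ⟨_, by omega⟩) (b := ⟨_, hlt⟩) ha rfl).1 (H _ _ ha rfl)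
  exact (forall_congr' parity_at_wall).trans
    (Fin.forall_eq_iff_forall_castSucc_eq_succ (f := fun i => (d i.succ - d i.castSucc) % 2)).symm

/-- Orientability criterion for the flag manifold `𝔽(d₁,…,d_k)` of type `A_l`:
with `0 = d₀ < d₁ < ⋯ < d_k < d_{k+1} = l+1` and `Θ = Σ \ {α_{d₁},…,α_{d_k}}`,
the parity condition `Σ_{β ∈ ⟨Θ⟩⁺} ⟨α∨, β⟩ ≡ 0 (mod 2)` for every `α ∈ Σ \ Θ`
holds iff all the differences `d_{i+1} − d_i` are congruent mod 2. -/
theorem stmt16 (l k : ℕ) (d : Fin (k + 2) → ℕ) (hmono : StrictMono d)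
    (h0 : d 0 = 0) (hlast : d (Fin.last (k + 1)) = l + 1) :
    ((∀ t : Fin k, ∀ a b : Fin (l + 1),
        a.val + 1 = d t.succ.castSucc → b.val = d t.succ.castSucc →
        ∃ m : ℤ,
          (∑ p ∈ Finset.univ.filter
              (fun p : Fin (l + 1) × Fin (l + 1) => p.1 < p.2 ∧
                ∃ s : Fin (k + 1), d s.castSucc ≤ p.1.val ∧ p.2.val < d s.succ),
            pairing
              (EuclideanSpace.single a (1 : ℝ) - EuclideanSpace.single b (1 : ℝ))
              (EuclideanSpace.single p.1 (1 : ℝ) - EuclideanSpace.single p.2 (1 : ℝ)))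
            = 2 * m) ↔
      (∀ i j : Fin (k + 1),
        (d i.succ - d i.castSucc) % 2 = (d j.succ - d j.castSucc) % 2)) :=
  stmt16_general l k d hmono hlast
end

section
/- Let H ∈ cl 𝔞⁺ and Θ(H) = {α ∈ Σ : α(H) = 0}. Then for the stable set of roots at w = 1 in the maximal flag case, Π⁻(H,1) = {β ∈ Π : β(H) < 0} equals Π⁻ \ ⟨Θ(H)⟩, and for every α ∈ Θ(H) the sum Σ_{β ∈ Π⁺ \ ⟨Θ(H)⟩} n_β ⟨α∨, β⟩ is even. -/
open RealInnerProductSpace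

/-! A positive root is a nonnegative integer combination of simple roots, all nonnegative at `H`,
so it vanishes at `H` only if every simple root it involves does. Hence `⟨Θ(H)⟩` consists exactly
of the roots vanishing at `H`; this gives `Π⁻(H,1) = Π⁻ \ ⟨Θ(H)⟩` and shows that `Π⁺ \ ⟨Θ(H)⟩` is
the set of roots positive at `H`. For `α ∈ Θ(H)` the reflection `r_α` fixes the values at `H`, so it
permutes that set; since it preserves `n` and negates `⟨α∨, ·⟩`, the sum is its own negative,
hence `0`. -/

section

variable {V : Type*} [NormedAddCommGroup V] [InnerProductSpace ℝ V]

theorem inner_reflect_left (α β H : V) :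
    ⟪reflect α β, H⟫ = ⟪β, H⟫ - pairing α β * ⟪α, H⟫ := by
  simp [reflect, inner_sub_left, real_inner_smul_left]

theorem pairing_reflect {α : V} (hα : α ≠ 0) (β : V) :
    pairing α (reflect α β) = -pairing α β := by
  have hαα : ⟪α, α⟫ ≠ 0 := inner_self_ne_zero.mpr hα
  simp only [pairing, reflect, inner_sub_right, real_inner_smul_right]
  field_simp
  ring

theorem reflect_reflect {α : V} (hα : α ≠ 0) (β : V) : reflect α (reflect α β) = β := by
  rw [reflect, pairing_reflect hα, reflect]
  module

theorem sum_mul_pairing_eq_zero {α : V} (hα : α ≠ 0) {T : Finset V}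
    (hT : ∀ β ∈ T, reflect α β ∈ T) {f : V → ℝ} (hf : ∀ β ∈ T, f (reflect α β) = f β) :
    ∑ β ∈ T, f β * pairing α β = 0 := by
  have hneg : ∑ β ∈ T, f β * pairing α β = -∑ β ∈ T, f β * pairing α β := by
    calc ∑ β ∈ T, f β * pairing α β
        = ∑ β ∈ T, f (reflect α β) * pairing α (reflect α β) :=
          (Finset.sum_nbij' (reflect α) (reflect α) hT hT (fun β _ => reflect_reflect hα β)
            (fun β _ => reflect_reflect hα β) fun _ _ => rfl).symm
      _ = -∑ β ∈ T, f β * pairing α β := by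
          rw [← Finset.sum_neg_distrib]
          refine Finset.sum_congr rfl fun β hβ => ?_
          rw [hf β hβ, pairing_reflect hα]
          ring
  linarith

theorem inner_eq_zero_of_mem_closure {T : Set V} {H : V} (hT : ∀ γ ∈ T, ⟪γ, H⟫ = 0) {x : V}
    (hx : x ∈ AddSubgroup.closure T) : ⟪x, H⟫ = 0 := by
  induction hx using AddSubgroup.closure_induction with
  | mem γ hγ => exact hT γ hγ
  | zero => simp
  | add a b _ _ ha hb => simp [inner_add_left, ha, hb]
  | neg a _ ha => simp [inner_neg_left, ha]

theorem sum_smul_mem_closure_of_inner_eq_zero {S : Finset V} {H : V}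
    (hS : ∀ γ ∈ S, 0 ≤ ⟪γ, H⟫) (c : V → ℕ) (h : ⟪∑ γ ∈ S, (c γ : ℝ) • γ, H⟫ = 0) :
    ∑ γ ∈ S, (c γ : ℝ) • γ ∈
      AddSubgroup.closure ((S.filter (fun α => ⟪α, H⟫ = 0) : Finset V) : Set V) := by
  simp only [sum_inner, real_inner_smul_left] at h
  have hterm := (Finset.sum_eq_zero_iff_of_nonneg fun γ hγ =>
    mul_nonneg (Nat.cast_nonneg _) (hS γ hγ)).mp h
  refine AddSubgroup.sum_mem _ fun γ hγ => ?_
  rcases mul_eq_zero.mp (hterm γ hγ) with hc | hγH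
  · simp [hc]
  · rw [Nat.cast_smul_eq_nsmul]
    exact AddSubgroup.nsmul_mem _
      (AddSubgroup.subset_closure (Finset.mem_filter.mpr ⟨hγ, hγH⟩)) _

variable {Φ ΦP : Finset V} {H : V}

theorem inner_nonpos_of_notMem (hP : IsPositiveSystem Φ ΦP) (hH : ∀ β ∈ ΦP, 0 ≤ ⟪β, H⟫)
    {β : V} (hβ : β ∈ Φ) (hβP : β ∉ ΦP) : ⟪β, H⟫ ≤ 0 := by
  have hneg : -β ∈ ΦP := ((hP.2 β hβ).resolve_left fun h => hβP h.1).1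
  simpa [inner_neg_left] using hH _ hneg

theorem mem_closure_iff_inner_eq_zero {S : Finset V} (hP : IsPositiveSystem Φ ΦP)
    (hS : IsSimpleSystem ΦP S) (hH : ∀ β ∈ ΦP, 0 ≤ ⟪β, H⟫) {β : V} (hβ : β ∈ Φ) :
    β ∈ AddSubgroup.closure ((S.filter (fun α => ⟪α, H⟫ = 0) : Finset V) : Set V) ↔
      ⟪β, H⟫ = 0 := by
  have hSH : ∀ γ ∈ S, 0 ≤ ⟪γ, H⟫ := fun γ hγ => hH γ (hS.1 hγ)
  have hpos : ∀ β ∈ ΦP, ⟪β, H⟫ = 0 →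
      β ∈ AddSubgroup.closure ((S.filter (fun α => ⟪α, H⟫ = 0) : Finset V) : Set V) := by
    intro β hβP hβH
    obtain ⟨c, rfl⟩ := hS.2 β hβP
    exact sum_smul_mem_closure_of_inner_eq_zero hSH c hβH
  refine ⟨inner_eq_zero_of_mem_closure fun γ hγ => (Finset.mem_filter.mp hγ).2, fun hβH => ?_⟩
  rcases hP.2 β hβ with ⟨hβP, -⟩ | ⟨hβP, -⟩
  · exact hpos β hβP hβH
  · simpa using AddSubgroup.neg_mem _ (hpos _ hβP (by simp [inner_neg_left, hβH]))

variable [DecidableEq V] {ΘR : Finset V}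

theorem filter_inner_neg_eq_sdiff (hP : IsPositiveSystem Φ ΦP) (hH : ∀ β ∈ ΦP, 0 ≤ ⟪β, H⟫)
    (hΘR : ∀ β, β ∈ ΘR ↔ β ∈ Φ ∧ ⟪β, H⟫ = 0) :
    Φ.filter (fun β => ⟪β, H⟫ < 0) = (Φ \ ΦP) \ ΘR := by
  ext β
  simp only [Finset.mem_filter, Finset.mem_sdiff, hΘR]
  constructor
  · rintro ⟨hβ, hβH⟩
    exact ⟨⟨hβ, fun hβP => (hH β hβP).not_gt hβH⟩, fun h => hβH.ne h.2⟩
  · rintro ⟨⟨hβ, hβP⟩, hβH⟩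
    exact ⟨hβ, (inner_nonpos_of_notMem hP hH hβ hβP).lt_of_ne fun h => hβH ⟨hβ, h⟩⟩

theorem sdiff_eq_filter_inner_pos (hP : IsPositiveSystem Φ ΦP) (hH : ∀ β ∈ ΦP, 0 ≤ ⟪β, H⟫)
    (hΘR : ∀ β, β ∈ ΘR ↔ β ∈ Φ ∧ ⟪β, H⟫ = 0) :
    ΦP \ ΘR = Φ.filter (fun β => 0 < ⟪β, H⟫) := by
  ext β
  simp only [Finset.mem_filter, Finset.mem_sdiff, hΘR]
  constructor
  · rintro ⟨hβP, hβH⟩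
    exact ⟨hP.1 hβP, (hH β hβP).lt_of_ne fun h => hβH ⟨hP.1 hβP, h.symm⟩⟩
  · rintro ⟨hβ, hβH⟩
    refine ⟨by_contra fun hβP => ?_, fun h => hβH.ne' h.2⟩
    exact (inner_nonpos_of_notMem hP hH hβ hβP).not_gt hβH

end

theorem stmt19_general {V : Type*} [NormedAddCommGroup V] [InnerProductSpace ℝ V] [DecidableEq V]
    (Φ ΦP S : Finset V) (hΦ : IsRootSystem Φ) (hP : IsPositiveSystem Φ ΦP)
    (hS : IsSimpleSystem ΦP S) (n : V → ℕ)
    (hninv : ∀ α ∈ Φ, ∀ β ∈ Φ, n (reflect α β) = n β)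
    (H : V) (hH : ∀ β ∈ ΦP, 0 ≤ ⟪β, H⟫)
    (ΘR : Finset V)
    (hΘR : ∀ β, β ∈ ΘR ↔
      β ∈ Φ ∧ β ∈ AddSubgroup.closure ((S.filter (fun α => ⟪α, H⟫ = 0) : Finset V) : Set V)) :
    (Φ.filter (fun β => ⟪β, H⟫ < 0) = (Φ \ ΦP) \ ΘR) ∧
    ∀ α ∈ S, ⟪α, H⟫ = 0 →
      ∃ m : ℤ, ∑ β ∈ ΦP \ ΘR, (n β : ℝ) * pairing α β = 2 * m := by
  obtain ⟨hne, hrefl, -⟩ := hΦ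
  have hΘR' : ∀ β, β ∈ ΘR ↔ β ∈ Φ ∧ ⟪β, H⟫ = 0 := fun β => by
    rw [hΘR]
    exact and_congr_right (mem_closure_iff_inner_eq_zero hP hS hH)
  refine ⟨filter_inner_neg_eq_sdiff hP hH hΘR', fun α hαS hαH => ⟨0, ?_⟩⟩
  have hα : α ∈ Φ := hP.1 (hS.1 hαS)
  rw [sdiff_eq_filter_inner_pos hP hH hΘR', Int.cast_zero, mul_zero]
  refine sum_mul_pairing_eq_zero (hne α hα) (fun β hβ => ?_) fun β hβ => ?_
  · obtain ⟨hβ, hβH⟩ := Finset.mem_filter.mp hβ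
    refine Finset.mem_filter.mpr ⟨hrefl α hα β hβ, ?_⟩
    rwa [inner_reflect_left, hαH, mul_zero, sub_zero]
  · rw [hninv α hα β (Finset.mem_filter.mp hβ).1]

/-- For `H ∈ cl 𝔞⁺` (identifying roots with vectors via the inner product) and
`Θ(H) = {α ∈ Σ : ⟨α, H⟩ = 0}`: the set `Π⁻(H,1) = {β ∈ Π : β(H) < 0}` equals
`Π⁻ \ ⟨Θ(H)⟩`, and for every `α ∈ Θ(H)` the sum
`Σ_{β ∈ Π⁺ \ ⟨Θ(H)⟩} n_β ⟨α∨, β⟩` is even. -/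
theorem stmt19 {V : Type*} [NormedAddCommGroup V] [InnerProductSpace ℝ V] [DecidableEq V]
    (Φ ΦP S : Finset V) (hΦ : IsRootSystem Φ) (hP : IsPositiveSystem Φ ΦP)
    (hS : IsSimpleSystem ΦP S) (n : V → ℕ)
    (hnpos : ∀ β ∈ Φ, 0 < n β)
    (hninv : ∀ α ∈ Φ, ∀ β ∈ Φ, n (reflect α β) = n β)
    (H : V) (hH : ∀ β ∈ ΦP, 0 ≤ ⟪β, H⟫)
    (ΘR : Finset V)
    (hΘR : ∀ β, β ∈ ΘR ↔
      β ∈ Φ ∧ β ∈ AddSubgroup.closure ((S.filter (fun α => ⟪α, H⟫ = 0) : Finset V) : Set V)) :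
    (Φ.filter (fun β => ⟪β, H⟫ < 0) = (Φ \ ΦP) \ ΘR) ∧
    ∀ α ∈ S, ⟪α, H⟫ = 0 →
      ∃ m : ℤ, ∑ β ∈ ΦP \ ΘR, (n β : ℝ) * pairing α β = 2 * m :=
  stmt19_general Φ ΦP S hΦ hP hS n hninv H hH ΘR hΘR
end
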